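/- Let (X, ‖·‖) be a normed space. For r ∈ [0, 1) and s > 0 let Γ(r, s) be the family of all mappings T : X → X such that for all x, y ∈ X: s‖x − Tx‖ ≤ ‖x − y‖ implies ‖Tx − Ty‖ ≤ r‖x − y‖. Then the following are equivalent: (i) X is a Banach space (i.e., X is complete); (ii) for every r ∈ [0, 1), every mapping T ∈ Γ(r, f(r)) has a fixed point; (iii) there exist r ∈ (0, 1) and s ∈ (0, f(r)] such that every mapping T ∈ Γ(r, s) has a fixed point. -/

import Mathlib

/-- The function f from Suzuki's theorem: f(r) = 1 on [0, (√5−1)/2],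
    (1−r)/r² on ((√5−1)/2, 1/√2), and 1/(1+r) on [1/√2, 1). -/
noncomputable def suzukiF (r : ℝ) : ℝ :=
  if r ≤ (Real.sqrt 5 - 1) / 2 then 1
  else if r < 1 / Real.sqrt 2 then (1 - r) / r ^ 2
  else 1 / (1 + r)

/-- The family Γ(r, s) of mappings `T` on `X` such that
    `s‖x − Tx‖ ≤ ‖x − y‖` implies `‖Tx − Ty‖ ≤ r‖x − y‖`. -/
def GammaFamily (X : Type*) [NormedAddCommGroup X] [NormedSpace ℝ X]
    (r s : ℝ) : Set (X → X) :=
  {T | ∀ x y : X, s * ‖x - T x‖ ≤ ‖x - y‖ → ‖T x - T y‖ ≤ r * ‖x - y‖}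

/-!
For `T` in `Γ(r, s)` with `s ≤ 1` one has `‖Tx − T²x‖ ≤ r‖x − Tx‖`, so in a Banach space the
Picard iterates converge to some `z`. Suzuki's argument shows that `z` is fixed as soon as
`2r² < 1 ∧ s r² ≤ 1 − r` or `s(1 + r) ≤ 1`, and `f(r)` is the largest `s ≤ 1` satisfying one of
these. Conversely, if `X` is not complete, pick `ẑ` in the completion outside `X` and let `T` map
`x` to a point whose distance to `ẑ` is at most `c · d(x, ẑ)` for a small `c > 0`: this `T` is in
`Γ(r, s)` and has no fixed point.
-/

open Filter Topology UniformSpace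

lemma one_half_lt_sqrt_five_sub_one_div_two : 1 / 2 < (Real.sqrt 5 - 1) / 2 := by
  nlinarith [Real.sq_sqrt (show (0 : ℝ) ≤ 5 by norm_num), Real.sqrt_nonneg 5]

lemma suzukiF_pos {r : ℝ} (hr : r < 1) : 0 < suzukiF r := by
  have := one_half_lt_sqrt_five_sub_one_div_two
  unfold suzukiF
  split_ifs with h₁ h₂
  · exact one_pos
  · exact div_pos (by linarith) (pow_pos (by linarith [not_le.1 h₁]) 2)
  · exact div_pos one_pos (by linarith [not_le.1 h₁])

lemma suzukiF_le_one (r : ℝ) : suzukiF r ≤ 1 := by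
  have h5 := Real.sq_sqrt (show (0 : ℝ) ≤ 5 by norm_num)
  have := one_half_lt_sqrt_five_sub_one_div_two
  unfold suzukiF
  split_ifs with h₁ h₂
  · exact le_rfl
  · rw [div_le_one (pow_pos (by linarith [not_le.1 h₁]) 2)]
    nlinarith [Real.sqrt_nonneg 5]
  · rw [div_le_one (by linarith [not_le.1 h₁])]
    linarith [not_le.1 h₁]

lemma suzukiF_one_half : suzukiF (1 / 2) = 1 :=
  if_pos one_half_lt_sqrt_five_sub_one_div_two.le

lemma lt_one_div_sqrt_two_iff {r : ℝ} (hr : 0 ≤ r) : r < 1 / Real.sqrt 2 ↔ 2 * r ^ 2 < 1 := by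
  rw [one_div, ← Real.sqrt_inv, Real.lt_sqrt hr]
  constructor <;> intro h <;> linarith

lemma suzukiF_cases {r : ℝ} (hr : 0 ≤ r) :
    (2 * r ^ 2 < 1 ∧ suzukiF r * r ^ 2 ≤ 1 - r) ∨ suzukiF r * (1 + r) ≤ 1 := by
  have h5 := Real.sq_sqrt (show (0 : ℝ) ≤ 5 by norm_num)
  have := one_half_lt_sqrt_five_sub_one_div_two
  unfold suzukiF
  split_ifs with h₁ h₂
  · -- `(√5 − 1)/2` is the positive root of `r² + r = 1`
    left
    constructor <;>
      nlinarith [mul_nonneg (sub_nonneg.2 h₁) (by linarith : 0 ≤ r + (Real.sqrt 5 + 1) / 2)]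
  · left
    have : 0 < r := by linarith [not_le.1 h₁]
    exact ⟨(lt_one_div_sqrt_two_iff hr).1 h₂, (div_mul_cancel₀ _ (by positivity)).le⟩
  · right
    rw [one_div_mul_cancel (by linarith [not_le.1 h₁])]

section SuzukiContraction

variable {X : Type*} [MetricSpace X] {r s : ℝ} {T : X → X}

def IsSuzukiContraction (r s : ℝ) (T : X → X) : Prop :=
  ∀ x y, s * dist x (T x) ≤ dist x y → dist (T x) (T y) ≤ r * dist x y

lemma mem_gammaFamily_iff {E : Type*} [NormedAddCommGroup E] [NormedSpace ℝ E] {T : E → E} :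
    T ∈ GammaFamily E r s ↔ IsSuzukiContraction r s T := by
  simp only [IsSuzukiContraction, dist_eq_norm]
  rfl

namespace IsSuzukiContraction

lemma dist_map_map_le (hT : IsSuzukiContraction r s T) (hs : s ≤ 1) (x : X) :
    dist (T x) (T (T x)) ≤ r * dist x (T x) :=
  hT x (T x) (mul_le_of_le_one_left dist_nonneg hs)

lemma dist_iterate_succ_le (hT : IsSuzukiContraction r s T) (hr : 0 ≤ r) (hs : s ≤ 1)
    (x : X) (n : ℕ) : dist (T^[n] x) (T^[n + 1] x) ≤ dist x (T x) * r ^ n := by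
  induction n with
  | zero => simp
  | succ n ih =>
    calc dist (T^[n + 1] x) (T^[n + 1 + 1] x)
        = dist (T (T^[n] x)) (T (T (T^[n] x))) := by simp only [Function.iterate_succ_apply']
      _ ≤ r * dist (T^[n] x) (T^[n + 1] x) := by
        rw [Function.iterate_succ_apply']
        exact hT.dist_map_map_le hs _
      _ ≤ r * (dist x (T x) * r ^ n) := by gcongr
      _ = dist x (T x) * r ^ (n + 1) := by ring

lemma cauchySeq_iterate (hT : IsSuzukiContraction r s T) (hr₀ : 0 ≤ r) (hr₁ : r < 1)
    (hs : s ≤ 1) (x : X) : CauchySeq fun n ↦ T^[n] x :=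
  cauchySeq_of_le_geometric r _ hr₁ (hT.dist_iterate_succ_le hr₀ hs x)

lemma dist_map_le_of_tendsto_iterate (hT : IsSuzukiContraction r s T) {x z : X}
    (hz : Tendsto (fun n ↦ T^[n] x) atTop (𝓝 z)) {y : X} (hy : y ≠ z) :
    dist z (T y) ≤ r * dist z y := by
  have hz' : Tendsto (fun n ↦ T (T^[n] x)) atTop (𝓝 z) := by
    simpa only [Function.comp_def, Function.iterate_succ_apply'] using
      hz.comp (tendsto_add_atTop_nat 1)
  have hstep : Tendsto (fun n ↦ s * dist (T^[n] x) (T (T^[n] x))) atTop (𝓝 0) := by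
    simpa using (hz.dist hz').const_mul s
  -- Suzuki's condition holds for the pairs `(Tⁿx, y)` once `Tⁿx` is close to `z ≠ y`.
  have htrig : ∀ᶠ n in atTop, s * dist (T^[n] x) (T (T^[n] x)) ≤ dist (T^[n] x) y :=
    (hstep.eventually_lt (hz.dist tendsto_const_nhds) (dist_pos.2 hy.symm)).mono fun _ ↦ le_of_lt
  refine le_of_tendsto_of_tendsto (hz'.dist tendsto_const_nhds)
    ((hz.dist tendsto_const_nhds).const_mul r) ?_
  filter_upwards [htrig] with n hn using hT _ _ hn

lemma map_eq_of_dist_map_le (hT : IsSuzukiContraction r s T) (hr : 0 ≤ r) (hs₀ : 0 ≤ s)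
    (hs₁ : s ≤ 1) (h2r : 2 * r ^ 2 < 1) (hsr : s * r ^ 2 ≤ 1 - r) {z : X}
    (hz : ∀ y ≠ z, dist z (T y) ≤ r * dist z y) : T z = z := by
  by_contra hTz
  set d := dist z (T z)
  have hd : 0 < d := dist_pos.2 (Ne.symm hTz)
  have h12 : dist (T z) (T (T z)) ≤ r * d := hT.dist_map_map_le hs₁ z
  have h02 : dist z (T (T z)) ≤ r * d := hz _ hTz
  have hT2z : T (T z) ≠ z := by
    intro h
    rw [h, dist_comm] at h12
    nlinarith
  have h03 : dist z (T (T (T z))) ≤ r ^ 2 * d := by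
    nlinarith [hz _ hT2z, mul_le_mul_of_nonneg_left h02 hr]
  have h23 : dist (T (T z)) (T (T (T z))) ≤ r ^ 2 * d := by
    nlinarith [hT.dist_map_map_le hs₁ (T z), mul_le_mul_of_nonneg_left h12 hr]
  have htrig : s * dist (T (T z)) (T (T (T z))) ≤ dist (T (T z)) z := by
    -- otherwise `d ≤ d(z, T²z) + d(T²z, Tz) < s r² d + r d ≤ d`
    by_contra! h
    have := dist_triangle z (T (T z)) (T z)
    rw [dist_comm (T (T z)) (T z), dist_comm z (T (T z))] at this
    nlinarith [mul_le_mul_of_nonneg_left h23 hs₀, mul_le_mul_of_nonneg_right hsr hd.le]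
  have h31 : dist (T (T (T z))) (T z) ≤ r ^ 2 * d :=
    calc _ ≤ r * dist (T (T z)) z := hT _ _ htrig
      _ ≤ r * (r * d) := by rw [dist_comm]; gcongr
      _ = r ^ 2 * d := by ring
  nlinarith [dist_triangle z (T (T (T z))) (T z), mul_pos (by linarith : 0 < 1 - 2 * r ^ 2) hd]

lemma le_dist_or_le_dist (hT : IsSuzukiContraction r s T) (hr : 0 ≤ r) (hs : 0 ≤ s)
    (hsr : s * (1 + r) ≤ 1) (x y : X) :
    s * dist x (T x) ≤ dist x y ∨ s * dist (T x) (T (T x)) ≤ dist (T x) y := by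
  by_contra! h
  have hs₁ : s ≤ 1 := by nlinarith
  nlinarith [mul_le_mul_of_nonneg_left (hT.dist_map_map_le hs₁ x) hs, dist_triangle x y (T x),
    dist_comm y (T x), mul_le_mul_of_nonneg_right hsr (dist_nonneg (x := x) (y := T x))]

lemma map_eq_of_tendsto_iterate (hT : IsSuzukiContraction r s T) (hr : 0 ≤ r) (hs : 0 ≤ s)
    (hsr : s * (1 + r) ≤ 1) {x z : X} (hz : Tendsto (fun n ↦ T^[n] x) atTop (𝓝 z)) :
    T z = z := by
  set u := fun n ↦ T^[n] x
  have hu : ∀ n, T (u n) = u (n + 1) := fun n ↦ (Function.iterate_succ_apply' T n x).symm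
  have hbound : ∀ n, dist z (T z) ≤
      dist (u (n + 1)) z + r * dist (u n) z + (dist (u (n + 2)) z + r * dist (u (n + 1)) z) := by
    intro n
    have hpos := fun m ↦ mul_nonneg hr (dist_nonneg (x := u m) (y := z))
    rcases hT.le_dist_or_le_dist hr hs hsr (u n) z with h | h
    · have := hT _ _ h
      rw [hu] at this
      linarith [dist_triangle_left z (T z) (u (n + 1)), dist_nonneg (x := u (n + 2)) (y := z),
        hpos (n + 1)]
    · have := hT _ _ h
      rw [hu, hu] at this
      linarith [dist_triangle_left z (T z) (u (n + 2)), dist_nonneg (x := u (n + 1)) (y := z),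
        hpos n]
  have hd : Tendsto (fun n ↦ dist (u n) z) atTop (𝓝 0) := tendsto_iff_dist_tendsto_zero.1 hz
  have hd₁ := hd.comp (tendsto_add_atTop_nat 1)
  have hlim := (hd₁.add (hd.const_mul r)).add ((hd.comp (tendsto_add_atTop_nat 2)).add
    (hd₁.const_mul r))
  simp only [mul_zero, add_zero] at hlim
  exact (dist_le_zero.1 (ge_of_tendsto' hlim hbound)).symm

theorem exists_fixedPoint [CompleteSpace X] [Nonempty X] (hT : IsSuzukiContraction r s T)
    (hr₀ : 0 ≤ r) (hr₁ : r < 1) (hs₀ : 0 ≤ s) (hs₁ : s ≤ 1)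
    (hcases : (2 * r ^ 2 < 1 ∧ s * r ^ 2 ≤ 1 - r) ∨ s * (1 + r) ≤ 1) : ∃ p, T p = p := by
  obtain ⟨z, hz⟩ :=
    cauchySeq_tendsto_of_complete (hT.cauchySeq_iterate hr₀ hr₁ hs₁ (Classical.arbitrary X))
  refine ⟨z, ?_⟩
  rcases hcases with ⟨h2r, hsr⟩ | hsr
  · exact hT.map_eq_of_dist_map_le hr₀ hs₀ hs₁ h2r hsr fun y hy ↦
      hT.dist_map_le_of_tendsto_iterate hz hy
  · exact hT.map_eq_of_tendsto_iterate hr₀ hs₀ hsr hz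

end IsSuzukiContraction

lemma isSuzukiContraction_of_dist_le {Y : Type*} [MetricSpace Y] {e : X → Y} (he : Isometry e)
    {z : Y} {c : ℝ} (hc₀ : 0 ≤ c) (hc : c ≤ 1 / 2) (hs : 0 < s) (hcrs : c * (4 + s) ≤ r * s)
    (hT : ∀ x, dist (e (T x)) z ≤ c * dist (e x) z) : IsSuzukiContraction r s T := by
  intro x y hxy
  have tri₁ : ∀ a b, dist (e a) z ≤ dist a b + dist (e b) z := fun a b ↦
    he.dist_eq a b ▸ dist_triangle _ _ _
  have tri₂ : ∀ a b, dist a b ≤ dist (e a) z + dist (e b) z := fun a b ↦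
    he.dist_eq a b ▸ dist_triangle_right _ _ _
  have h₁ : dist (e x) z ≤ 2 * dist x (T x) := by
    nlinarith [tri₁ x (T x), hT x, mul_le_mul_of_nonneg_right hc (dist_nonneg (x := e x) (y := z))]
  have h₂ : s * dist (e x) z ≤ 2 * dist x y := by nlinarith [mul_le_mul_of_nonneg_left h₁ hs.le]
  have h₃ : dist (e y) z ≤ dist x y + dist (e x) z := dist_comm x y ▸ tri₁ y x
  have h₄ : dist (T x) (T y) ≤ c * (2 * dist (e x) z + dist x y) := by
    nlinarith [tri₂ (T x) (T y), hT x, hT y, mul_le_mul_of_nonneg_left h₃ hc₀]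
  have : s * dist (T x) (T y) ≤ s * (r * dist x y) := by
    nlinarith [mul_le_mul_of_nonneg_left h₄ hs.le, mul_le_mul_of_nonneg_left h₂ hc₀,
      mul_le_mul_of_nonneg_right hcrs (dist_nonneg (x := x) (y := y))]
  exact le_of_mul_le_mul_left this hs

lemma exists_notMem_range_coe_of_not_completeSpace (h : ¬CompleteSpace X) :
    ∃ z : Completion X, z ∉ Set.range ((↑) : X → Completion X) := by
  by_contra! hz
  apply h
  rw [completeSpace_iff_isComplete_range Completion.coe_isometry.isUniformInducing,
    Set.eq_univ_of_forall hz]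
  exact isComplete_univ

theorem completeSpace_of_forall_exists_fixedPoint (hr : 0 < r) (hs : 0 < s)
    (h : ∀ T : X → X, IsSuzukiContraction r s T → ∃ p, T p = p) : CompleteSpace X := by
  by_contra hX
  obtain ⟨z, hz⟩ := exists_notMem_range_coe_of_not_completeSpace hX
  have hpos : ∀ x : X, 0 < dist (x : Completion X) z := fun x ↦ dist_pos.2 fun h ↦ hz ⟨x, h⟩
  set c := min (1 / 2) (r * s / (4 + s))
  have hc₀ : 0 < c := lt_min (by norm_num) (by positivity)
  have hcrs : c * (4 + s) ≤ r * s := (le_div_iff₀ (by linarith)).1 (min_le_right _ _)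
  have hnear : ∀ x : X, ∃ y : X, dist (y : Completion X) z < c * dist (x : Completion X) z :=
    fun x ↦ by
      obtain ⟨y, hy⟩ :=
        Metric.denseRange_iff.1 Completion.denseRange_coe z _ (mul_pos hc₀ (hpos x))
      exact ⟨y, by rwa [dist_comm]⟩
  choose T hT using hnear
  obtain ⟨p, hp⟩ := h T (isSuzukiContraction_of_dist_le Completion.coe_isometry hc₀.le
    (min_le_left _ _) hs hcrs fun x ↦ (hT x).le)
  have := hT p
  rw [hp] at this
  nlinarith [hpos p, min_le_left (1 / 2 : ℝ) (r * s / (4 + s))]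

end SuzukiContraction

theorem stmt_5 {X : Type*} [NormedAddCommGroup X] [NormedSpace ℝ X] :
    List.TFAE
      [CompleteSpace X,
       ∀ r ∈ Set.Ico (0 : ℝ) 1, ∀ T ∈ GammaFamily X r (suzukiF r), ∃ p : X, T p = p,
       ∃ r ∈ Set.Ioo (0 : ℝ) 1, ∃ s ∈ Set.Ioc (0 : ℝ) (suzukiF r),
         ∀ T ∈ GammaFamily X r s, ∃ p : X, T p = p] := by
  tfae_have 1 → 2 := fun _ r hr T hT ↦
    (mem_gammaFamily_iff.1 hT).exists_fixedPoint hr.1 hr.2 (suzukiF_pos hr.2).le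
      (suzukiF_le_one r) (suzukiF_cases hr.1)
  tfae_have 2 → 3 := fun h ↦
    ⟨1 / 2, ⟨by norm_num, by norm_num⟩, 1, ⟨one_pos, suzukiF_one_half.ge⟩, fun T hT ↦
      h (1 / 2) ⟨by norm_num, by norm_num⟩ T (by rwa [suzukiF_one_half])⟩
  tfae_have 3 → 1 := fun ⟨r, hr, s, hs, hfix⟩ ↦
    completeSpace_of_forall_exists_fixedPoint hr.1 hs.1 fun T hT ↦
      hfix T (mem_gammaFamily_iff.2 hT)
  tfae_finish
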